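/- arXiv:2511.10551 — 2 statements merged into one kernel-verified Lean document; each statement's English description precedes it below -/
import Mathlib

section
/- Let ρ : F₂ → Isom(X) be a group homomorphism from the free group on two generators to the isometry group of a metric space X. If there exist constants C > 0 and D ≥ 0 such that l_S(ρ(γ)) ≥ ‖γ‖/C − D for every primitive element γ ∈ F₂, then in fact l_S(ρ(γ)) ≥ ‖γ‖/C for every primitive γ ∈ F₂ (the additive constant D can be removed without changing the multiplicative constant C). -/
open Metric Filter Set Topology

/-- The Gromov product `(x|y)_z = ½(d(z,x)+d(z,y)−d(x,y))`. -/
noncomputable def gromovProd {X : Type*} [MetricSpace X] (x y z : X) : ℝ :=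
  (dist z x + dist z y - dist x y) / 2

/-- A parametrized geodesic segment from `x` to `y` (defined on `[0, dist x y]`). -/
def IsGeodesicSegment {X : Type*} [MetricSpace X] (x y : X) (f : ℝ → X) : Prop :=
  f 0 = x ∧ f (dist x y) = y ∧
    ∀ s ∈ Set.Icc (0 : ℝ) (dist x y), ∀ t ∈ Set.Icc (0 : ℝ) (dist x y),
      dist (f s) (f t) = |s - t|

/-- The metric space `X` is geodesic: any two points are joined by a geodesic segment. -/
def GeodesicMetricSpace (X : Type*) [MetricSpace X] : Prop :=
  ∀ x y : X, ∃ f : ℝ → X, IsGeodesicSegment x y f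

/-- `X` is δ-hyperbolic in the sense of Rips: every geodesic triangle is δ-thin,
i.e. each side is contained in the δ-neighbourhood of the union of the other two. -/
def RipsHyperbolic (X : Type*) [MetricSpace X] (δ : ℝ) : Prop :=
  ∀ (x y z : X) (f g h : ℝ → X),
    IsGeodesicSegment x y f → IsGeodesicSegment y z g → IsGeodesicSegment z x h →
      ∀ s ∈ Set.Icc (0 : ℝ) (dist x y),
        infDist (f s) (g '' Set.Icc 0 (dist y z) ∪ h '' Set.Icc 0 (dist z x)) ≤ δ

/-- A (parametrized) geodesic line in `X`. -/
def IsGeodesicLine {X : Type*} [MetricSpace X] (L : ℝ → X) : Prop :=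
  ∀ s t : ℝ, dist (L s) (L t) = |s - t|

/-- A (parametrized) geodesic ray in `X` (parametrized on `[0,∞)`). -/
def IsGeodesicRay {X : Type*} [MetricSpace X] (r : ℝ → X) : Prop :=
  ∀ s t : ℝ, 0 ≤ s → 0 ≤ t → dist (r s) (r t) = |s - t|

/-- `L` is a geodesic from `A⁻` to `A⁺` (oriented toward `A⁺`): it is a geodesic line
such that, with `x₀ = L 0`, the Gromov products `(Aⁿx₀ | L t)_{x₀}` tend to `+∞` as
`min(n,t) → +∞`, and `(A⁻ⁿx₀ | L (−t))_{x₀}` tend to `+∞` as `min(n,t) → +∞`. -/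
def IsGeodesicFromTo {X : Type*} [MetricSpace X] (A : X ≃ᵢ X) (L : ℝ → X) : Prop :=
  IsGeodesicLine L ∧
    (∀ M : ℝ, ∃ N : ℝ, ∀ (n : ℕ) (t : ℝ), N ≤ (n : ℝ) → N ≤ t →
      M ≤ gromovProd ((A ^ n) (L 0)) (L t) (L 0)) ∧
    (∀ M : ℝ, ∃ N : ℝ, ∀ (n : ℕ) (t : ℝ), N ≤ (n : ℝ) → N ≤ t →
      M ≤ gromovProd ((A⁻¹ ^ n) (L 0)) (L (-t)) (L 0))

/-- An element of `F₂` is primitive if it is the image of a generator under an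
automorphism of `F₂` (equivalently, it belongs to some free basis). -/
def Primitive (γ : FreeGroup (Fin 2)) : Prop :=
  ∃ φ : FreeGroup (Fin 2) ≃* FreeGroup (Fin 2), φ (FreeGroup.of 0) = γ

/-- The (reduced) word length of an element of `F₂`. -/
noncomputable def wordLength (γ : FreeGroup (Fin 2)) : ℕ := γ.toWord.length

/-- The cyclically reduced word length `‖γ‖`: the minimum of the word lengths
of the conjugates of `γ`. -/
noncomputable def cycLength (γ : FreeGroup (Fin 2)) : ℕ :=
  sInf (Set.range fun g : FreeGroup (Fin 2) => wordLength (g * γ * g⁻¹))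

/-- `γ` is cyclically reduced if its word length equals its cyclically reduced length. -/
def CyclicallyReduced (γ : FreeGroup (Fin 2)) : Prop :=
  wordLength γ = cycLength γ

/-!
If `γ = φ a` is primitive, so is `γᴺ δ` with `δ = φ b`, for every `N`, and
`l_S(ρ(γᴺ δ)) ≤ d(ρ(γ)ᴺ x₀, x₀) + d(ρ(δ) x₀, x₀)`. On the word side `‖γᴺ δ‖ ≥ N ‖γ‖ - K`.
Indeed `‖·‖` is the growth rate of `|xⁿ|`, hence conjugation invariant, so we may take `γ` to be
a cyclically reduced word `c`. The cyclic length of `w` is `|w|` minus twice the length of its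
conjugator, a common prefix of `w` and `w⁻¹`, and such a prefix cannot cover a full period of the
periodic part `cᴺ`: a period symmetric under inversion about a centre forces a letter to cancel with itself or
with its neighbour. Applying the hypothesis to `γᴺ δ`, dividing by `N` and letting `N → ∞`
removes `D` together with `K`.
-/

namespace List

theorem HasPeriod.getElem?_add_mul {α : Type*} {w : List α} {p : ℕ} (hw : w.HasPeriod p)
    {i q : ℕ} (h : i + p * q < w.length) : w[i + p * q]? = w[i]? := by
  have := hw.getElem?_mod p (i + p * q) w h
  rw [Nat.add_mul_mod_self_left, hw.getElem?_mod p i w (by omega)] at this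
  exact this.symm

theorem hasPeriod_flatten_replicate {α : Type*} (c : List α) (N : ℕ) :
    (replicate N c).flatten.HasPeriod c.length := by
  rcases N with _ | N
  · simp
  · rw [HasPeriod, replicate_succ, flatten_cons, take_left' rfl, prefix_append_right_inj,
      ← flatten_cons, ← replicate_succ, replicate_succ', flatten_concat]
    exact prefix_append _ _

end List

open List

namespace FreeGroup

section Words

variable {α : Type*}

def invLetter (a : α × Bool) : α × Bool := (a.1, !a.2)

theorem getElem?_invRev {L : List (α × Bool)} {i : ℕ} (hi : i < L.length) :
    (invRev L)[i]? = L[L.length - 1 - i]?.map invLetter := by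
  rw [invRev, getElem?_reverse (by simpa using hi), length_map, getElem?_map]
  rfl

theorem getElem?_eq_map_invLetter_of_prefix {K L : List (α × Bool)} (hL : K <+: L)
    (hinv : K <+: invRev L) {i : ℕ} (hi : i < K.length) :
    L[i]? = L[L.length - 1 - i]?.map invLetter := by
  rw [prefix_iff_getElem?.mp hL i hi, ← prefix_iff_getElem?.mp hinv i hi,
    getElem?_invRev (hi.trans_le hL.length_le)]

theorem IsReduced.false_of_hasPeriod_of_symm {L : List (α × Bool)} (hL : IsReduced L)
    {n M s : ℕ} (hn : 0 < n) (hper : L.HasPeriod n) (hM : 2 * M ≤ s) (hs : s - M < L.length)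
    (hsymm : ∀ m, M ≤ m → m < M + n → L[m]? = L[s - m]?.map invLetter) : False := by
  -- Periodicity carries the symmetry to the centre `m = s / 2`.
  set m := s / 2
  set r := (m - M) % n
  set q := (m - M) / n
  have hdiv : n * q + r = m - M := Nat.div_add_mod (m - M) n
  have hr : r < n := Nat.mod_lt _ hn
  have hcenter : L[m]? = L[s - m]?.map invLetter := by
    have h₁ : L[M + r + n * q]? = L[M + r]? := hper.getElem?_add_mul (by omega)
    have h₂ : L[s - m + n * q]? = L[s - m]? := hper.getElem?_add_mul (by omega)
    rw [show M + r + n * q = m by omega, show s - m + n * q = s - (M + r) by omega] at *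
    rw [h₁, ← h₂]
    exact hsymm (M + r) (by omega) (by omega)
  obtain ⟨x, hx⟩ : ∃ x, L[m]? = some x := ⟨L[m], getElem?_eq_getElem (by omega)⟩
  rcases Nat.even_or_odd' s with ⟨k, hk | hk⟩
  · rw [show s - m = m by omega, hx] at hcenter
    simp [invLetter, Prod.ext_iff] at hcenter
  · obtain ⟨y, hy⟩ : ∃ y, L[m + 1]? = some y := ⟨_, getElem?_eq_getElem (by omega)⟩
    rw [show s - m = m + 1 by omega, hx, hy] at hcenter
    have hadj := isChain_iff_getElem.mp hL m (by omega)
    simp only [getElem?_eq_some_iff] at hx hy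
    obtain ⟨_, rfl⟩ := hx
    obtain ⟨_, rfl⟩ := hy
    simp only [Option.map_some, Option.some.injEq, invLetter] at hcenter
    simp [hcenter] at hadj

end Words

open reduceCyclically

variable {α : Type*} [DecidableEq α]

theorem IsReduced.exists_reduce_append {L₁ L₂ : List (α × Bool)} (h₁ : IsReduced L₁)
    (h₂ : IsReduced L₂) :
    ∃ A S B, L₁ = A ++ S ∧ L₂ = invRev S ++ B ∧ reduce (L₁ ++ L₂) = A ++ B := by
  induction L₁ using List.reverseRecOn generalizing L₂ with
  | nil => exact ⟨[], [], L₂, rfl, rfl, h₂.reduce_eq⟩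
  | append_singleton L₁ x ih =>
    have h₁' : IsReduced L₁ := h₁.infix ⟨[], [x], by simp⟩
    rcases L₂ with _ | ⟨y, L₂⟩
    · exact ⟨L₁ ++ [x], [], [], by simp, rfl, by simpa using h₁.reduce_eq⟩
    by_cases hxy : y = invLetter x
    · obtain ⟨A, S, B, rfl, rfl, hred⟩ := ih (L₂ := L₂) h₁' (h₂.infix ⟨[y], [], by simp⟩)
      refine ⟨A, S ++ [x], B, by simp, by simp [hxy, invRev, invLetter], ?_⟩
      rw [← hred, ← reduce.Step.eq (Red.Step.not (L₁ := A ++ S) (x := x.1) (b := x.2))]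
      simp [hxy, invLetter]
    · refine ⟨L₁ ++ [x], [], y :: L₂, by simp, rfl, IsReduced.reduce_eq ?_⟩
      refine isChain_append.mpr ⟨h₁, h₂, fun a ha b hb hab => ?_⟩
      simp only [getLast?_concat, Option.mem_some_iff, head?_cons] at ha hb
      subst ha hb
      obtain ⟨a, b⟩ := x
      obtain ⟨a', b'⟩ := y
      simp only [invLetter, Prod.mk.injEq, not_and] at hxy hab ⊢
      subst hab
      cases b <;> cases b' <;> simp_all

def cyclicNorm (x : FreeGroup α) : ℕ := (reduceCyclically x.toWord).length

theorem norm_pow_succ (x : FreeGroup α) (n : ℕ) :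
    norm (x ^ (n + 1)) = (n + 1) * cyclicNorm x + 2 * (conjugator x.toWord).length := by
  rw [norm, toWord_pow, reduce_flatten_replicate_succ isReduced_toWord]
  simp only [length_append, length_flatten, map_replicate, sum_replicate, invRev_length,
    smul_eq_mul, cyclicNorm]
  ring

theorem cyclicNorm_le_norm (x : FreeGroup α) : cyclicNorm x ≤ norm x := by
  have := norm_pow_succ x 0
  rw [pow_one] at this
  omega

theorem cyclicNorm_conj_le (g x : FreeGroup α) : cyclicNorm (g * x * g⁻¹) ≤ cyclicNorm x := by
  -- `|(g x g⁻¹)ⁿ|` and `|xⁿ|` differ by at most `2 |g|`, while they grow like `n` times the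
  -- cyclic norms.
  by_contra! hlt
  set k := 2 * norm g + 2 * (conjugator x.toWord).length with hk
  have hpow : norm ((g * x * g⁻¹) ^ (k + 1)) ≤ norm (x ^ (k + 1)) + 2 * norm g := by
    rw [conj_pow]
    calc norm (g * x ^ (k + 1) * g⁻¹) ≤ norm g + norm (x ^ (k + 1)) + norm g⁻¹ :=
          (norm_mul_le _ _).trans (Nat.add_le_add_right (norm_mul_le _ _) _)
      _ = norm (x ^ (k + 1)) + 2 * norm g := by rw [norm_inv_eq]; ring
  rw [norm_pow_succ, norm_pow_succ] at hpow
  nlinarith [Nat.mul_le_mul_left (k + 1) hlt]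

theorem cyclicNorm_conj (g x : FreeGroup α) : cyclicNorm (g * x * g⁻¹) = cyclicNorm x := by
  refine le_antisymm (cyclicNorm_conj_le g x) ?_
  simpa [mul_assoc] using cyclicNorm_conj_le g⁻¹ (g * x * g⁻¹)

theorem conj_mk_reduceCyclically (x : FreeGroup α) :
    mk (conjugator x.toWord) * mk (reduceCyclically x.toWord) * (mk (conjugator x.toWord))⁻¹
      = x := by
  rw [inv_mk, mul_mk, mul_mk, conj_conjugator_reduceCyclically, mk_toWord]

theorem conjugator_prefix (L : List (α × Bool)) : conjugator L <+: L :=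
  ⟨reduceCyclically L ++ invRev (conjugator L), by
    rw [← append_assoc, conj_conjugator_reduceCyclically]⟩

theorem conjugator_prefix_invRev (L : List (α × Bool)) : conjugator L <+: invRev L :=
  ⟨invRev (reduceCyclically L) ++ invRev (conjugator L), by
    conv_rhs => rw [← conj_conjugator_reduceCyclically L]
    simp [append_assoc]⟩

theorem le_cyclicNorm_pow_mul {c : List (α × Bool)} (hc : IsCyclicallyReduced c) (N : ℕ)
    (y : FreeGroup α) :
    N * c.length ≤ cyclicNorm (mk c ^ N * y) + 2 * norm y + 2 * c.length := by
  rcases Nat.eq_zero_or_pos c.length with hc₀ | hc₀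
  · simp [hc₀]
  set p := (replicate N c).flatten
  have hp : (mk c ^ N).toWord = p := by
    rw [toWord_pow, toWord_mk, hc.isReduced.reduce_eq, (hc.flatten_replicate N).isReduced.reduce_eq]
  obtain ⟨A, S, B, hAS, hSB, hAB⟩ :=
    (hc.flatten_replicate N).isReduced.exists_reduce_append (isReduced_toWord (x := y))
  have hw : (mk c ^ N * y).toWord = A ++ B := by rw [toWord_mul, hp, hAB]
  have hlenp : A.length + S.length = N * c.length := by
    simpa [p] using (congrArg length hAS).symm
  have hleny : norm y = S.length + B.length := by
    simpa [norm] using congrArg length hSB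
  by_cases hshort : A.length ≤ B.length + c.length
  · omega
  set K := conjugator (mk c ^ N * y).toWord
  have hnorm : A.length + B.length = cyclicNorm (mk c ^ N * y) + 2 * K.length := by
    have := norm_pow_succ (mk c ^ N * y) 0
    rw [pow_one, zero_add, one_mul] at this
    rw [← length_append, ← hw]
    exact this
  suffices K.length < B.length + c.length by omega
  -- Otherwise the common prefix `K` of `A ++ B` and its inverse covers a full period of `A`.
  by_contra! hK
  have hA : IsReduced A := by
    have := isReduced_toWord (x := mk c ^ N * y)
    rw [hw] at this
    exact this.infix (prefix_append A B).isInfix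
  refine hA.false_of_hasPeriod_of_symm (n := c.length) (M := B.length)
    (s := A.length + B.length - 1) (by omega)
    ((hasPeriod_flatten_replicate c N).infix ⟨[], S, by simp [hAS]⟩) (by omega) (by omega) ?_
  intro m hm₁ hm₂
  have := getElem?_eq_map_invLetter_of_prefix (conjugator_prefix _)
    (conjugator_prefix_invRev _) (show m < K.length by omega)
  rw [hw, getElem?_append_left (by omega), length_append,
    getElem?_append_left (by omega)] at this
  exact this

theorem exists_le_cyclicNorm_pow_mul (x y : FreeGroup α) :
    ∃ K, ∀ N : ℕ, N * cyclicNorm x ≤ cyclicNorm (x ^ N * y) + K := by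
  obtain ⟨g, hg⟩ : ∃ g, g * mk (reduceCyclically x.toWord) * g⁻¹ = x :=
    ⟨_, conj_mk_reduceCyclically x⟩
  refine ⟨2 * norm (g⁻¹ * y * g) + 2 * cyclicNorm x, fun N => ?_⟩
  have hconj : x ^ N * y = g * (mk (reduceCyclically x.toWord) ^ N * (g⁻¹ * y * g)) * g⁻¹ := by
    conv_lhs => rw [← hg, conj_pow]
    group
  rw [hconj, cyclicNorm_conj, ← add_assoc]
  exact le_cyclicNorm_pow_mul (isCyclicallyReduced isReduced_toWord) N _

end FreeGroup

section FreeGroupOfRankTwo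

open FreeGroup reduceCyclically

theorem cycLength_eq_cyclicNorm (γ : FreeGroup (Fin 2)) : cycLength γ = γ.cyclicNorm := by
  refine le_antisymm (Nat.sInf_le ⟨(mk (conjugator γ.toWord))⁻¹, ?_⟩)
    (le_csInf (Set.range_nonempty _) ?_)
  · have hconj : (mk (conjugator γ.toWord))⁻¹ * γ * (mk (conjugator γ.toWord))⁻¹⁻¹
        = mk (reduceCyclically γ.toWord) := by
      nth_rw 2 [← conj_mk_reduceCyclically γ]
      group
    simp only [hconj, wordLength, toWord_mk,
      (isCyclicallyReduced isReduced_toWord).isReduced.reduce_eq, cyclicNorm]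
  · rintro _ ⟨g, rfl⟩
    rw [← cyclicNorm_conj g γ]
    exact cyclicNorm_le_norm _

def nielsenEquiv (N : ℕ) : FreeGroup (Fin 2) ≃* FreeGroup (Fin 2) :=
  MonoidHom.toMulEquiv (lift ![of 0 ^ N * of 1, of 0]) (lift ![of 1, (of 1 ^ N)⁻¹ * of 0])
    (by ext i; fin_cases i <;> simp) (by ext i; fin_cases i <;> simp)

theorem primitive_pow_mul (φ : FreeGroup (Fin 2) ≃* FreeGroup (Fin 2)) (N : ℕ) :
    Primitive (φ (of 0) ^ N * φ (of 1)) :=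
  ⟨(nielsenEquiv N).trans φ, by simp [nielsenEquiv]⟩

end FreeGroupOfRankTwo

namespace IsometryEquiv

variable {X : Type*} [PseudoMetricSpace X]

theorem dist_mul_apply_le (A B : X ≃ᵢ X) (x : X) :
    dist ((A * B) x) x ≤ dist (A x) x + dist (B x) x :=
  calc dist (A (B x)) x ≤ dist (A (B x)) (A x) + dist (A x) x := dist_triangle _ _ _
    _ = dist (A x) x + dist (B x) x := by rw [A.dist_eq, add_comm]

theorem dist_pow_apply_le (A : X ≃ᵢ X) (x : X) (n : ℕ) :
    dist ((A ^ n) x) x ≤ n * dist (A x) x := by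
  induction n with
  | zero => simp
  | succ n ih =>
    rw [pow_succ', Nat.cast_succ, add_mul, one_mul, add_comm]
    exact (dist_mul_apply_le _ _ x).trans (by linarith)

theorem le_dist_of_tendsto (A : X ≃ᵢ X) (x : X) {l : ℝ}
    (h : Tendsto (fun n : ℕ => dist ((A ^ n) x) x / n) atTop (𝓝 l)) : l ≤ dist (A x) x := by
  refine le_of_tendsto h (Eventually.of_forall fun n => ?_)
  rcases Nat.eq_zero_or_pos n with rfl | hn
  · simp
  · rw [div_le_iff₀ (by positivity), mul_comm]
    exact dist_pow_apply_le A x n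

end IsometryEquiv

theorem le_of_tendsto_div_of_sub_le {a E L : ℝ} {b : ℕ → ℝ}
    (hb : Tendsto (fun n : ℕ => b n / n) atTop (𝓝 L)) (h : ∀ n : ℕ, n * a - E ≤ b n) :
    a ≤ L := by
  have hlin : Tendsto (fun n : ℕ => a - E / n) atTop (𝓝 a) := by
    simpa using tendsto_const_nhds.sub (tendsto_const_div_atTop_nhds_zero_nat E)
  refine le_of_tendsto_of_tendsto hlin hb ((eventually_gt_atTop 0).mono fun n hn => ?_)
  have hn : (0 : ℝ) < n := by exact_mod_cast hn
  rw [le_div_iff₀ hn, sub_mul, div_mul_cancel₀ _ hn.ne', mul_comm]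
  exact h n

theorem bowditch_growth_additive_constant_removal_general
    {X : Type*} [MetricSpace X]
    (ρ : FreeGroup (Fin 2) →* (X ≃ᵢ X)) (x₀ : X)
    (lS : FreeGroup (Fin 2) → ℝ)
    (hlS : ∀ γ : FreeGroup (Fin 2),
      Tendsto (fun n : ℕ => dist ((ρ γ ^ n) x₀) x₀ / n) atTop (𝓝 (lS γ)))
    (C D : ℝ) (hC : 0 < C)
    (hgrowth : ∀ γ : FreeGroup (Fin 2), Primitive γ → (cycLength γ : ℝ) / C - D ≤ lS γ) :
    ∀ γ : FreeGroup (Fin 2), Primitive γ → (cycLength γ : ℝ) / C ≤ lS γ := by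
  rintro γ ⟨φ, rfl⟩
  set δ := φ (FreeGroup.of 1)
  obtain ⟨K, hK⟩ := FreeGroup.exists_le_cyclicNorm_pow_mul (φ (FreeGroup.of 0)) δ
  refine le_of_tendsto_div_of_sub_le (E := K / C + D + dist (ρ δ x₀) x₀) (hlS _) fun N => ?_
  have hlength : (N * cycLength (φ (FreeGroup.of 0)) : ℝ) / C
      ≤ (cycLength (φ (FreeGroup.of 0) ^ N * δ) + K : ℝ) / C := by
    gcongr
    simp only [cycLength_eq_cyclicNorm]
    exact_mod_cast hK N
  have hdisplacement : lS (φ (FreeGroup.of 0) ^ N * δ)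
      ≤ dist ((ρ (φ (FreeGroup.of 0)) ^ N) x₀) x₀ + dist (ρ δ x₀) x₀ := by
    refine ((ρ _).le_dist_of_tendsto x₀ (hlS _)).trans ?_
    rw [map_mul, map_pow]
    exact IsometryEquiv.dist_mul_apply_le _ _ x₀
  have hprimitive := hgrowth _ (primitive_pow_mul φ N)
  rw [add_div, mul_div_assoc] at hlength
  linarith

/-- If `l_S(ρ(γ)) ≥ ‖γ‖/C − D` for every primitive `γ ∈ F₂`, then in fact
`l_S(ρ(γ)) ≥ ‖γ‖/C` for every primitive `γ`: the additive constant can be removed. -/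
theorem bowditch_growth_additive_constant_removal
    {X : Type*} [MetricSpace X]
    (ρ : FreeGroup (Fin 2) →* (X ≃ᵢ X)) (x₀ : X)
    (lS : FreeGroup (Fin 2) → ℝ)
    (hlS : ∀ γ : FreeGroup (Fin 2),
      Tendsto (fun n : ℕ => dist ((ρ γ ^ n) x₀) x₀ / n) atTop (𝓝 (lS γ)))
    (C D : ℝ) (hC : 0 < C) (hD : 0 ≤ D)
    (hgrowth : ∀ γ : FreeGroup (Fin 2), Primitive γ → (cycLength γ : ℝ) / C - D ≤ lS γ) :
    ∀ γ : FreeGroup (Fin 2), Primitive γ → (cycLength γ : ℝ) / C ≤ lS γ :=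
  bowditch_growth_additive_constant_removal_general ρ x₀ lS hlS C D hC hgrowth
end

section
/- Let X be a geodesic δ-hyperbolic metric space, let A be a hyperbolic isometry of X, and let L : ℝ → X be a geodesic from A⁻ to A⁺. Then for every point x in the image of L, d(x, A x) ≤ l_S(A) + 20δ (the stable norm is nearly attained on any geodesic joining the fixed points of A at infinity). -/
open Metric Filter Set Topology

private lemma div_le_div_of_nonneg_right' {a b c : ℝ} (h : a ≤ b) (hc : 0 < c) :
    a / c ≤ b / c := by gcongr

private lemma gromov_comm {X : Type*} [MetricSpace X] (x y z : X) :
    gromovProd x y z = gromovProd y x z := by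
  simp only [gromovProd, dist_comm]
  ring

private lemma gromov_le_dist {X : Type*} [MetricSpace X] {c₁ c₂ p : X} (z : X)
    (h : dist c₁ p + dist p c₂ = dist c₁ c₂) : gromovProd c₁ c₂ z ≤ dist z p := by
  have h1 := dist_triangle z p c₁
  have h2 := dist_triangle z p c₂
  have h3 : dist p c₁ = dist c₁ p := dist_comm _ _
  simp only [gromovProd]
  linarith

private lemma seg_compact {X : Type*} [MetricSpace X] {x y : X} {f : ℝ → X}
    (h : IsGeodesicSegment x y f) : IsCompact (f '' Set.Icc 0 (dist x y)) := by
  apply isCompact_Icc.image_of_continuousOn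
  refine (LipschitzOnWith.of_dist_le_mul (K := 1) ?_).continuousOn
  intro a ha b hb
  rw [h.2.2 a ha b hb, Real.dist_eq, NNReal.coe_one, one_mul]

private lemma seg_nonempty {X : Type*} [MetricSpace X] {x y : X} {f : ℝ → X} :
    (f '' Set.Icc 0 (dist x y)).Nonempty :=
  ⟨f 0, ⟨0, ⟨le_refl _, dist_nonneg⟩, rfl⟩⟩

private lemma seg_between {X : Type*} [MetricSpace X] {x y : X} {f : ℝ → X}
    (h : IsGeodesicSegment x y f) {w : ℝ} (hw : w ∈ Set.Icc 0 (dist x y)) :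
    dist x (f w) = w ∧ dist (f w) y = dist x y - w := by
  have h0 : (0:ℝ) ∈ Set.Icc 0 (dist x y) := ⟨le_refl _, dist_nonneg⟩
  have hD : dist x y ∈ Set.Icc 0 (dist x y) := ⟨dist_nonneg, le_refl _⟩
  constructor
  · rw [← h.1]
    rw [h.2.2 0 h0 w hw]
    rw [abs_of_nonpos (by linarith [hw.1])]
    ring
  · have h2 := h.2.2 w hw _ hD
    rw [h.2.1] at h2
    rw [h2, abs_of_nonpos (by linarith [hw.2])]
    ring

private lemma close_to_seg {X : Type*} [MetricSpace X] {δ : ℝ} (hδ : 0 ≤ δ)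
    (hgeo : GeodesicMetricSpace X) (hhyp : RipsHyperbolic X δ)
    (A : X ≃ᵢ X) (L : ℝ → X) (hL : IsGeodesicFromTo A L) (s : ℝ) :
    ∃ N : ℕ, ∀ m k : ℕ, N ≤ m → N ≤ k → ∀ σ : ℝ → X,
      IsGeodesicSegment ((A⁻¹ ^ m) (L 0)) ((A ^ k) (L 0)) σ →
      ∃ u ∈ Set.Icc (0:ℝ) (dist ((A⁻¹ ^ m) (L 0)) ((A ^ k) (L 0))),
        dist (L s) (σ u) ≤ 2 * δ := by
  obtain ⟨hline, hplus, hminus⟩ := hL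
  set M : ℝ := |s| + 2*δ + 1 with hM
  obtain ⟨Np, hNp⟩ := hplus M
  obtain ⟨Nm, hNm⟩ := hminus M
  obtain ⟨N, hN⟩ := exists_nat_ge (max Np Nm)
  refine ⟨N, ?_⟩
  intro m k hm hk σ hσ
  set a : X := (A⁻¹ ^ m) (L 0) with ha
  set b : X := (A ^ k) (L 0) with hb
  set t' : ℝ := max Np (|s| + 1) with ht'
  set t : ℝ := max Nm (|s| + 1) with ht
  have habs : (0:ℝ) ≤ |s| := abs_nonneg s
  have hs_le : s ≤ |s| := le_abs_self s
  have hs_ge : -|s| ≤ s := neg_abs_le s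
  have ht'1 : |s| + 1 ≤ t' := le_max_right _ _
  have ht1 : |s| + 1 ≤ t := le_max_right _ _
  have hkr : Np ≤ (k : ℝ) := le_trans (le_trans (le_max_left _ _) hN) (Nat.cast_le.mpr hk)
  have hmr : Nm ≤ (m : ℝ) := le_trans (le_trans (le_max_right _ _) hN) (Nat.cast_le.mpr hm)
  have hdist1 : dist (L (-t)) (L t') = t + t' := by
    rw [hline, abs_of_nonpos (by linarith)]; ring
  have hL0s : dist (L 0) (L s) = |s| := by
    rw [hline, abs_sub_comm]; norm_num
  -- triangle 1
  obtain ⟨g₁, hg₁⟩ := hgeo (L t') b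
  obtain ⟨h₁, hh₁⟩ := hgeo b (L (-t))
  have hf₁ : IsGeodesicSegment (L (-t)) (L t') (fun u => L (u - t)) := by
    refine ⟨by norm_num, ?_, ?_⟩
    · rw [hdist1]; show L (t + t' - t) = L t'; congr 1; ring
    · intro u _ v _
      rw [hline, show (u - t) - (v - t) = u - v by ring]
  have hmem1 : s + t ∈ Set.Icc (0:ℝ) (dist (L (-t)) (L t')) := by
    rw [hdist1]; constructor <;> [linarith; linarith]
  have hthin1 := hhyp (L (-t)) (L t') b _ g₁ h₁ hf₁ hg₁ hh₁ (s + t) hmem1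
  have hfs : L (s + t - t) = L s := by congr 1; ring
  rw [hfs] at hthin1
  have hcpt1 : IsCompact (g₁ '' Set.Icc 0 (dist (L t') b) ∪ h₁ '' Set.Icc 0 (dist b (L (-t)))) :=
    (seg_compact hg₁).union (seg_compact hh₁)
  obtain ⟨p, hp, hpd⟩ := hcpt1.exists_infDist_eq_dist
    (Set.Nonempty.inl seg_nonempty) (L s)
  rw [hpd] at hthin1
  rcases hp with hp | hp
  · exfalso
    obtain ⟨w, hw, rfl⟩ := hp
    have hbtw := seg_between hg₁ hw
    have hsum : dist (L t') (g₁ w) + dist (g₁ w) b = dist (L t') b := by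
      rw [hbtw.1, hbtw.2]; ring
    have h1 : gromovProd (L t') b (L 0) ≤ dist (L 0) (g₁ w) := gromov_le_dist _ hsum
    have h2 : M ≤ gromovProd ((A ^ k) (L 0)) (L t') (L 0) := hNp k t' hkr (le_max_left _ _)
    rw [gromov_comm] at h1
    have h3 : dist (L 0) (g₁ w) ≤ |s| + δ := by
      calc dist (L 0) (g₁ w) ≤ dist (L 0) (L s) + dist (L s) (g₁ w) := dist_triangle _ _ _
        _ ≤ |s| + δ := by rw [hL0s]; linarith [hthin1]
    rw [← hb] at h2
    linarith
  obtain ⟨w₁, hw₁, rfl⟩ := hp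
  -- triangle 2
  obtain ⟨g₂, hg₂⟩ := hgeo (L (-t)) a
  have hthin2 := hhyp b (L (-t)) a h₁ g₂ σ hh₁ hg₂ hσ w₁ hw₁
  have hcpt2 : IsCompact (g₂ '' Set.Icc 0 (dist (L (-t)) a) ∪ σ '' Set.Icc 0 (dist a b)) :=
    (seg_compact hg₂).union (seg_compact hσ)
  obtain ⟨p₂, hp₂, hpd₂⟩ := hcpt2.exists_infDist_eq_dist
    (Set.Nonempty.inl seg_nonempty) (h₁ w₁)
  rw [hpd₂] at hthin2
  rcases hp₂ with hp₂ | hp₂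
  · exfalso
    obtain ⟨w₂, hw₂, rfl⟩ := hp₂
    have hbtw := seg_between hg₂ hw₂
    have hsum : dist (L (-t)) (g₂ w₂) + dist (g₂ w₂) a = dist (L (-t)) a := by
      rw [hbtw.1, hbtw.2]; ring
    have h1 : gromovProd (L (-t)) a (L 0) ≤ dist (L 0) (g₂ w₂) := gromov_le_dist _ hsum
    have h2 : M ≤ gromovProd ((A⁻¹ ^ m) (L 0)) (L (-t)) (L 0) := hNm m t hmr (le_max_left _ _)
    rw [gromov_comm] at h1
    have h3 : dist (L 0) (g₂ w₂) ≤ |s| + 2*δ := by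
      calc dist (L 0) (g₂ w₂)
          ≤ dist (L 0) (L s) + dist (L s) (h₁ w₁) + dist (h₁ w₁) (g₂ w₂) :=
            dist_triangle4 _ _ _ _
        _ ≤ |s| + 2*δ := by rw [hL0s]; linarith [hthin1, hthin2]
    rw [← ha] at h2
    linarith
  obtain ⟨u, hu, rfl⟩ := hp₂
  refine ⟨u, hu, ?_⟩
  calc dist (L s) (σ u) ≤ dist (L s) (h₁ w₁) + dist (h₁ w₁) (σ u) := dist_triangle _ _ _
    _ ≤ 2 * δ := by linarith [hthin1, hthin2]

private lemma pow_apply_cancel {X : Type*} [MetricSpace X] (A : X ≃ᵢ X) (m : ℕ) (y : X) :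
    (A ^ m) ((A⁻¹ ^ m) y) = y := by
  have h : (A ^ m) * (A⁻¹ ^ m) = 1 := by rw [inv_pow]; group
  show ((A ^ m) * (A⁻¹ ^ m)) y = y
  rw [h]; rfl

private lemma dist_iso_pow {X : Type*} [MetricSpace X] (A : X ≃ᵢ X) (m k : ℕ) (y : X) :
    dist ((A⁻¹ ^ m) y) ((A ^ k) y) = dist ((A ^ (m + k)) y) y := by
  calc dist ((A⁻¹ ^ m) y) ((A ^ k) y)
      = dist ((A ^ m) ((A⁻¹ ^ m) y)) ((A ^ m) ((A ^ k) y)) := ((A ^ m).dist_eq _ _).symm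
    _ = dist y ((A ^ (m + k)) y) := by
        rw [pow_apply_cancel]
        congr 1
        show ((A ^ m) * (A ^ k)) y = (A ^ (m + k)) y
        rw [← pow_add]
    _ = dist ((A ^ (m + k)) y) y := dist_comm _ _

private lemma dist_inv_pow_self {X : Type*} [MetricSpace X] (A : X ≃ᵢ X) (m : ℕ) (y : X) :
    dist ((A⁻¹ ^ m) y) y = dist ((A ^ m) y) y := by
  calc dist ((A⁻¹ ^ m) y) y = dist ((A ^ m) ((A⁻¹ ^ m) y)) ((A ^ m) y) :=
        ((A ^ m).dist_eq _ _).symm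
    _ = dist y ((A ^ m) y) := by rw [pow_apply_cancel]
    _ = _ := dist_comm _ _

private lemma gromov_iso {X : Type*} [MetricSpace X] (A : X ≃ᵢ X) (p q r : X) :
    gromovProd (A p) (A q) (A r) = gromovProd p q r := by
  simp [gromovProd, IsometryEquiv.dist_eq]

private lemma comp_geodFromTo {X : Type*} [MetricSpace X] (A : X ≃ᵢ X) (L : ℝ → X)
    (hL : IsGeodesicFromTo A L) : IsGeodesicFromTo A (fun t => A (L t)) := by
  obtain ⟨h1, h2, h3⟩ := hL
  refine ⟨fun u v => by rw [IsometryEquiv.dist_eq]; exact h1 u v, ?_, ?_⟩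
  · intro M
    obtain ⟨N, hN⟩ := h2 M
    refine ⟨N, fun n t hn ht => ?_⟩
    have key : (A ^ n) (A (L 0)) = A ((A ^ n) (L 0)) := by
      show ((A ^ n) * A) (L 0) = (A * (A ^ n)) (L 0)
      rw [← pow_succ, ← pow_succ']
    calc M ≤ gromovProd ((A ^ n) (L 0)) (L t) (L 0) := hN n t hn ht
      _ = gromovProd (A ((A ^ n) (L 0))) (A (L t)) (A (L 0)) := (gromov_iso A _ _ _).symm
      _ = gromovProd ((A ^ n) (A (L 0))) (A (L t)) (A (L 0)) := by rw [key]
  · intro M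
    obtain ⟨N, hN⟩ := h3 M
    refine ⟨N, fun n t hn ht => ?_⟩
    have key : (A⁻¹ ^ n) (A (L 0)) = A ((A⁻¹ ^ n) (L 0)) := by
      show ((A⁻¹ ^ n) * A) (L 0) = (A * (A⁻¹ ^ n)) (L 0)
      have : (A⁻¹ ^ n) * A = A * (A⁻¹ ^ n) := by group
      rw [this]
    calc M ≤ gromovProd ((A⁻¹ ^ n) (L 0)) (L (-t)) (L 0) := hN n t hn ht
      _ = gromovProd (A ((A⁻¹ ^ n) (L 0))) (A (L (-t))) (A (L 0)) := (gromov_iso A _ _ _).symm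
      _ = gromovProd ((A⁻¹ ^ n) (A (L 0))) (A (L (-t))) (A (L 0)) := by rw [key]

/-- The stable norm is nearly attained on the axis: if `A` is a hyperbolic
isometry and `L` is a geodesic from `A⁻` to `A⁺`, then `d(x, Ax) ≤ l_S(A) + 20δ` for
every point `x` on `L`. -/
theorem stable_norm_nearly_attained_on_axis
    {X : Type*} [MetricSpace X] (δ : ℝ) (hδ : 0 ≤ δ)
    (hgeo : GeodesicMetricSpace X) (hhyp : RipsHyperbolic X δ)
    (A : X ≃ᵢ X) (x₀ : X) (lA : ℝ)
    (hlA : Tendsto (fun n : ℕ => dist ((A ^ n) x₀) x₀ / n) atTop (𝓝 lA))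
    (hAhyp : 0 < lA)
    (L : ℝ → X) (hL : IsGeodesicFromTo A L) :
    ∀ x ∈ Set.range L, dist x (A x) ≤ lA + 20 * δ := by
  rintro x ⟨s, rfl⟩
  set Y : X := L 0 with hY
  set e : ℕ → ℝ := fun j => dist ((A ^ j) Y) Y with he
  have he0 : e 0 = 0 := by
    show dist ((A ^ 0) Y) Y = 0
    rw [pow_zero]
    simp
  -- subadditivity
  have hsub : ∀ m n : ℕ, e (m + n) ≤ e m + e n := by
    intro m n
    have hrw : (A ^ (m + n)) Y = (A ^ n) ((A ^ m) Y) := by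
      rw [Nat.add_comm m n, pow_add]; rfl
    show dist ((A ^ (m + n)) Y) Y ≤ _
    rw [hrw]
    calc dist ((A ^ n) ((A ^ m) Y)) Y
        ≤ dist ((A ^ n) ((A ^ m) Y)) ((A ^ n) Y) + dist ((A ^ n) Y) Y := dist_triangle _ _ _
      _ = e m + e n := by rw [(A ^ n).dist_eq]
  -- limit with basepoint Y
  have hlim : Tendsto (fun j : ℕ => e j / j) atTop (𝓝 lA) := by
    set d₀ : ℝ := dist x₀ Y with hd₀
    have hcomp : ∀ j : ℕ, dist ((A ^ j) x₀) x₀ - 2 * d₀ ≤ e j ∧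
        e j ≤ dist ((A ^ j) x₀) x₀ + 2 * d₀ := by
      intro j
      have h2 := dist_triangle4 ((A ^ j) Y) ((A ^ j) x₀) x₀ Y
      have h3 := dist_triangle4 ((A ^ j) x₀) ((A ^ j) Y) Y x₀
      have h4 : dist ((A ^ j) x₀) ((A ^ j) Y) = dist x₀ Y := by rw [(A ^ j).dist_eq]
      have h1 : dist ((A ^ j) Y) ((A ^ j) x₀) = dist x₀ Y := by
        rw [(A ^ j).dist_eq, dist_comm]
      have h5 : dist Y x₀ = dist x₀ Y := dist_comm _ _
      constructor
      · simp only [he]; linarith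
      · simp only [he]; linarith
    have hz : Tendsto (fun j : ℕ => (2 * d₀) / j) atTop (𝓝 0) :=
      tendsto_const_div_atTop_nhds_zero_nat _
    have hlow : Tendsto (fun j : ℕ => dist ((A ^ j) x₀) x₀ / j - (2 * d₀) / j) atTop (𝓝 lA) := by
      have := hlA.sub hz
      simpa using this
    have hhigh : Tendsto (fun j : ℕ => dist ((A ^ j) x₀) x₀ / j + (2 * d₀) / j) atTop (𝓝 lA) := by
      have := hlA.add hz
      simpa using this
    refine tendsto_of_tendsto_of_tendsto_of_le_of_le' hlow hhigh ?_ ?_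
    · filter_upwards [eventually_ge_atTop 1] with j hj
      have hjp : (0:ℝ) < j := by exact_mod_cast hj
      rw [← sub_div]
      exact div_le_div_of_nonneg_right' (hcomp j).1 hjp
    · filter_upwards [eventually_ge_atTop 1] with j hj
      have hjp : (0:ℝ) < j := by exact_mod_cast hj
      rw [← add_div]
      exact div_le_div_of_nonneg_right' (hcomp j).2 hjp
  -- lower bound  lA * j ≤ e j
  have hlower : ∀ j : ℕ, 1 ≤ j → lA * j ≤ e j := by
    intro j hj
    have hjp : (0:ℝ) < j := by exact_mod_cast hj
    have hmul : ∀ c : ℕ, e (c * j) ≤ (c : ℝ) * e j := by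
      intro c
      induction c with
      | zero => simp [he0]
      | succ c ih =>
        have h1 : (c + 1) * j = c * j + j := by ring
        rw [h1]
        calc e (c * j + j) ≤ e (c * j) + e j := hsub _ _
          _ ≤ (c : ℝ) * e j + e j := by linarith
          _ = ((c : ℝ) + 1) * e j := by ring
          _ = ((c + 1 : ℕ) : ℝ) * e j := by push_cast; ring
    have hmono : Tendsto (fun c : ℕ => c * j) atTop atTop :=
      tendsto_atTop.2 fun b => eventually_atTop.2
        ⟨b, fun c hc => le_trans hc (Nat.le_mul_of_pos_right c hj)⟩
    have htend : Tendsto (fun c : ℕ => e (c * j) / ((c * j : ℕ) : ℝ)) atTop (𝓝 lA) :=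
      hlim.comp hmono
    have hle : lA ≤ e j / j := by
      refine le_of_tendsto htend ?_
      filter_upwards [eventually_ge_atTop 1] with c hc
      have hcp : (0:ℝ) < c := by exact_mod_cast hc
      have hcjp : (0:ℝ) < ((c * j : ℕ) : ℝ) := by
        have : 1 ≤ c * j := Nat.one_le_iff_ne_zero.mpr (by positivity)
        exact_mod_cast this
      calc e (c * j) / ((c * j : ℕ) : ℝ) ≤ ((c : ℝ) * e j) / ((c * j : ℕ) : ℝ) :=
            div_le_div_of_nonneg_right' (hmul c) hcjp
        _ = ((c : ℝ) * e j) / ((c : ℝ) * (j : ℝ)) := by push_cast; ring_nf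
        _ = e j / j := mul_div_mul_left _ _ (ne_of_gt hcp)
    exact (le_div_iff₀ hjp).mp hle
  -- superadditivity from the axis
  obtain ⟨N₀, hN₀⟩ := close_to_seg hδ hgeo hhyp A L hL 0
  have hsup : ∀ m k : ℕ, N₀ + 1 ≤ m → N₀ + 1 ≤ k → e m + e k ≤ e (m + k) + 4 * δ := by
    intro m k hm hk
    obtain ⟨σ, hσ⟩ := hgeo ((A⁻¹ ^ m) Y) ((A ^ k) Y)
    obtain ⟨u, hu, hq⟩ := hN₀ m k (by omega) (by omega) σ hσ
    have hbtw := seg_between hσ hu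
    have hem : e m ≤ u + 2 * δ := by
      have step : dist ((A⁻¹ ^ m) Y) Y ≤ dist ((A⁻¹ ^ m) Y) (σ u) + dist (σ u) Y :=
        dist_triangle _ _ _
      have hdc : dist (σ u) Y = dist Y (σ u) := dist_comm _ _
      have := dist_inv_pow_self A m Y
      simp only [he]
      rw [← this]
      rw [hbtw.1] at step
      linarith [hq]
    have hek : e k ≤ (dist ((A⁻¹ ^ m) Y) ((A ^ k) Y) - u) + 2 * δ := by
      have step : dist ((A ^ k) Y) Y ≤ dist ((A ^ k) Y) (σ u) + dist (σ u) Y :=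
        dist_triangle _ _ _
      have hd1 : dist ((A ^ k) Y) (σ u) = dist (σ u) ((A ^ k) Y) := dist_comm _ _
      have hd2 : dist (σ u) Y = dist Y (σ u) := dist_comm _ _
      simp only [he]
      rw [hd1, hbtw.2, hd2] at step
      linarith [hq]
    have hD : dist ((A⁻¹ ^ m) Y) ((A ^ k) Y) = e (m + k) := dist_iso_pow A m k Y
    rw [hD] at hek
    linarith
  -- upper bound  e j ≤ lA * j + 4δ for j ≥ N₀ + 1
  have hupper : ∀ j : ℕ, N₀ + 1 ≤ j → e j ≤ lA * j + 4 * δ := by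
    intro j hj
    have hj1 : 1 ≤ j := by omega
    have hjp : (0:ℝ) < j := by exact_mod_cast hj1
    have hmul : ∀ c : ℕ, 1 ≤ c → (c : ℝ) * (e j - 4 * δ) ≤ e (c * j) := by
      intro c hc
      induction c, hc using Nat.le_induction with
      | base => simp; linarith
      | succ c hc ih =>
        have h1 : (c + 1) * j = c * j + j := by ring
        have hcj : N₀ + 1 ≤ c * j := le_trans hj (Nat.le_mul_of_pos_left j (by omega))
        have h2 : e (c * j) + e j ≤ e (c * j + j) + 4 * δ := hsup (c * j) j hcj hj
        rw [h1]
        push_cast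
        nlinarith [h2, ih]
    have hmono : Tendsto (fun c : ℕ => c * j) atTop atTop :=
      tendsto_atTop.2 fun b => eventually_atTop.2
        ⟨b, fun c hc => le_trans hc (Nat.le_mul_of_pos_right c hj1)⟩
    have htend : Tendsto (fun c : ℕ => e (c * j) / ((c * j : ℕ) : ℝ)) atTop (𝓝 lA) :=
      hlim.comp hmono
    have hge : (e j - 4 * δ) / j ≤ lA := by
      refine ge_of_tendsto htend ?_
      filter_upwards [eventually_ge_atTop 1] with c hc
      have hcp : (0:ℝ) < c := by exact_mod_cast hc
      have hcjp : (0:ℝ) < ((c * j : ℕ) : ℝ) := by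
        have : 1 ≤ c * j := Nat.one_le_iff_ne_zero.mpr (by positivity)
        exact_mod_cast this
      calc (e j - 4 * δ) / j = ((c : ℝ) * (e j - 4 * δ)) / ((c : ℝ) * (j : ℝ)) :=
            (mul_div_mul_left _ _ (ne_of_gt hcp)).symm
        _ = ((c : ℝ) * (e j - 4 * δ)) / ((c * j : ℕ) : ℝ) := by push_cast; ring_nf
        _ ≤ e (c * j) / ((c * j : ℕ) : ℝ) := div_le_div_of_nonneg_right' (hmul c hc) hcjp
    have := (div_le_iff₀ hjp).mp hge
    linarith
  -- main construction
  obtain ⟨N₁, hN₁⟩ := close_to_seg hδ hgeo hhyp A L hL s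
  obtain ⟨N₂, hN₂⟩ := close_to_seg hδ hgeo hhyp A (fun t => A (L t)) (comp_geodFromTo A L hL) s
  set n : ℕ := max (max N₁ N₂) (N₀ + 1) with hn
  set a : X := (A⁻¹ ^ (n + 1)) Y with haa
  set b : X := (A ^ (n + 1)) Y with hbb
  obtain ⟨σ, hσ⟩ := hgeo a b
  obtain ⟨u, hu, hxu⟩ := hN₁ (n + 1) (n + 1) (by omega) (by omega) σ (by rw [haa, hbb] at hσ; exact hσ)
  have e1 : (A⁻¹ ^ (n + 2)) (A Y) = a := by
    rw [haa]
    show ((A⁻¹ ^ (n + 2)) * A) Y = (A⁻¹ ^ (n + 1)) Y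
    congr 1
    rw [pow_succ]
    rw [mul_assoc, inv_mul_cancel, mul_one]
  have e2 : (A ^ n) (A Y) = b := by
    rw [hbb]
    show ((A ^ n) * A) Y = (A ^ (n + 1)) Y
    rw [← pow_succ]
  have hσ2 : IsGeodesicSegment ((A⁻¹ ^ (n + 2)) ((fun t => A (L t)) 0))
      ((A ^ n) ((fun t => A (L t)) 0)) σ := by
    show IsGeodesicSegment ((A⁻¹ ^ (n + 2)) (A Y)) ((A ^ n) (A Y)) σ
    rw [e1, e2]; exact hσ
  obtain ⟨v, hv0, hxv0⟩ := hN₂ (n + 2) n (by omega) (by omega) σ hσ2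
  have hv : v ∈ Set.Icc (0:ℝ) (dist a b) := by
    have h2 : dist ((A⁻¹ ^ (n + 2)) (A Y)) ((A ^ n) (A Y)) = dist a b := by rw [e1, e2]
    have h3 : v ∈ Set.Icc (0:ℝ) (dist ((A⁻¹ ^ (n + 2)) (A Y)) ((A ^ n) (A Y))) := hv0
    rwa [h2] at h3
  have hxv : dist (A (L s)) (σ v) ≤ 2 * δ := hxv0
  -- betweenness data
  have hbu := seg_between hσ hu
  have hbv := seg_between hσ hv
  have huv : dist (σ u) (σ v) = |u - v| := hσ.2.2 u hu v hv
  -- distance identities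
  set c : X := (A⁻¹ ^ (n + 2)) Y with hc
  set d' : X := (A ^ n) Y with hd'
  have hcb : dist c b = e ((n + 2) + (n + 1)) := by
    rw [hc, hbb]; exact dist_iso_pow A (n + 2) (n + 1) Y
  have had' : dist a d' = e ((n + 1) + n) := by
    rw [haa, hd']; exact dist_iso_pow A (n + 1) n Y
  have hDe : dist a b = e ((n + 1) + (n + 1)) := by
    rw [haa, hbb]; exact dist_iso_pow A (n + 1) (n + 1) Y
  have hAc : A c = a := by
    rw [hc, haa]
    show (A * (A⁻¹ ^ (n + 2))) Y = (A⁻¹ ^ (n + 1)) Y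
    congr 1
    rw [pow_succ']
    rw [← mul_assoc, mul_inv_cancel, one_mul]
  have hAd' : A d' = b := by
    rw [hd', hbb]
    show (A * (A ^ n)) Y = (A ^ (n + 1)) Y
    rw [← pow_succ']
  have hcLs : dist c (L s) = dist a (A (L s)) := by
    rw [← hAc]; exact (A.dist_eq _ _).symm
  have hd'Ls : dist (L s) d' = dist (A (L s)) b := by
    rw [← hAd']
    exact (A.dist_eq _ _).symm
  have hxu2 : dist (σ u) (L s) ≤ 2 * δ := by rw [dist_comm]; exact hxu
  have hxv2 : dist (σ v) (A (L s)) ≤ 2 * δ := by rw [dist_comm]; exact hxv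
  have h_Lsb : dist (L s) b ≤ (dist a b - u) + 2 * δ := by
    calc dist (L s) b ≤ dist (L s) (σ u) + dist (σ u) b := dist_triangle _ _ _
      _ ≤ (dist a b - u) + 2 * δ := by rw [hbu.2]; linarith
  have h_aLs : dist a (L s) ≤ u + 2 * δ := by
    calc dist a (L s) ≤ dist a (σ u) + dist (σ u) (L s) := dist_triangle _ _ _
      _ ≤ u + 2 * δ := by rw [hbu.1]; linarith
  have h_aALs : dist a (A (L s)) ≤ v + 2 * δ := by
    calc dist a (A (L s)) ≤ dist a (σ v) + dist (σ v) (A (L s)) := dist_triangle _ _ _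
      _ ≤ v + 2 * δ := by rw [hbv.1]; linarith
  have h_ALsb : dist (A (L s)) b ≤ (dist a b - v) + 2 * δ := by
    calc dist (A (L s)) b ≤ dist (A (L s)) (σ v) + dist (σ v) b := dist_triangle _ _ _
      _ ≤ (dist a b - v) + 2 * δ := by rw [hbv.2]; linarith
  have F1 : e ((n + 2) + (n + 1)) ≤ (v + 2 * δ) + ((dist a b - u) + 2 * δ) := by
    rw [← hcb]
    calc dist c b ≤ dist c (L s) + dist (L s) b := dist_triangle _ _ _
      _ ≤ _ := by rw [hcLs]; linarith
  have F2 : e ((n + 1) + n) ≤ (u + 2 * δ) + ((dist a b - v) + 2 * δ) := by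
    rw [← had']
    calc dist a d' ≤ dist a (L s) + dist (L s) d' := dist_triangle _ _ _
      _ ≤ _ := by rw [hd'Ls]; linarith
  have hE3 : lA * (((n + 2) + (n + 1) : ℕ) : ℝ) ≤ e ((n + 2) + (n + 1)) := hlower _ (by omega)
  have hE1 : lA * (((n + 1) + n : ℕ) : ℝ) ≤ e ((n + 1) + n) := hlower _ (by omega)
  have hE2 : e ((n + 1) + (n + 1)) ≤ lA * (((n + 1) + (n + 1) : ℕ) : ℝ) + 4 * δ :=
    hupper _ (by omega)
  rw [hDe] at F1 F2
  push_cast at hE1 hE2 hE3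
  clear_value n e Y a b c d'
  have habs : |u - v| ≤ lA + 8 * δ := by
    rw [abs_le]
    constructor
    · linarith [F2, hE1, hE2]
    · linarith [F1, hE3, hE2, hAhyp]
  calc dist (L s) (A (L s))
      ≤ dist (L s) (σ u) + dist (σ u) (σ v) + dist (σ v) (A (L s)) := dist_triangle4 _ _ _ _
    _ ≤ 2 * δ + (lA + 8 * δ) + 2 * δ := by rw [huv]; linarith
    _ ≤ lA + 20 * δ := by linarith
end
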